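/- arXiv:2205.11765 — 5 statements merged into one kernel-verified Lean document; each statement's English description precedes it below -/
import Mathlib

section
/- Let W ⊆ ℝ^d be nonempty, closed and convex, let F : ℝ^d → ℝ be differentiable, λ-strongly convex and L-smooth with 0 < λ ≤ L, and let w* ∈ W satisfy ∇F(w*) = 0. If w ∈ ℝ^d and g ∈ ℝ^d satisfy ‖g − ∇F(w)‖₂ ≤ Δ, then ‖Π_W(w − (1/L)g) − w*‖₂ ≤ (1 − λ/(L+λ))·‖w − w*‖₂ + Δ/L. -/
open scoped RealInnerProductSpace

section Aux
variable {E : Type*} [NormedAddCommGroup E] [InnerProductSpace ℝ E] [CompleteSpace E]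

variable {E : Type*} [NormedAddCommGroup E] [InnerProductSpace ℝ E] [CompleteSpace E]

/-- Descent lemma for an `L`-smooth function. -/
lemma descent_lemma (F : E → ℝ) (F' : E → E) (L : ℝ)
    (hgrad : ∀ w, HasGradientAt F (F' w) w)
    (hsmooth : ∀ w w', ‖F' w - F' w'‖ ≤ L * ‖w - w'‖)
    (x y : E) : F y ≤ F x + ⟪F' x, y - x⟫ + L / 2 * ‖y - x‖ ^ 2 := by
  set v := y - x with hv
  have hpath : ∀ t : ℝ, HasDerivAt (fun t : ℝ => x + t • v) v t := by
    intro t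
    simpa using ((hasDerivAt_id t).smul_const v).const_add x
  have hφ : ∀ t : ℝ, HasDerivAt (fun t : ℝ => F (x + t • v)) ⟪F' (x + t • v), v⟫ t := by
    intro t
    have h1 := (hgrad (x + t • v)).hasFDerivAt.comp_hasDerivAt t (hpath t)
    simpa [InnerProductSpace.toDual_apply_apply, Function.comp_def] using h1
  set ψ : ℝ → ℝ := fun t => F (x + t • v) - t * ⟪F' x, v⟫ - L / 2 * (t ^ 2 * ‖v‖ ^ 2) with hψdef
  have hψ : ∀ t : ℝ, HasDerivAt ψ
      (⟪F' (x + t • v), v⟫ - ⟪F' x, v⟫ - L / 2 * ((2 * t) * ‖v‖ ^ 2)) t := by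
    intro t
    have h1 : HasDerivAt (fun t : ℝ => t * ⟪F' x, v⟫) ⟪F' x, v⟫ t := by
      simpa using (hasDerivAt_id t).mul_const ⟪F' x, v⟫
    have h2 : HasDerivAt (fun t : ℝ => L / 2 * (t ^ 2 * ‖v‖ ^ 2)) (L / 2 * ((2 * t) * ‖v‖ ^ 2)) t := by
      have := (hasDerivAt_pow 2 t).mul_const (‖v‖ ^ 2)
      simpa [mul_comm, mul_assoc, mul_left_comm] using this.const_mul (L / 2)
    exact ((hφ t).sub h1).sub h2
  have hanti : AntitoneOn ψ (Set.Icc (0:ℝ) 1) := by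
    apply antitoneOn_of_deriv_nonpos (convex_Icc 0 1)
    · exact fun t _ => (hψ t).continuousAt.continuousWithinAt
    · exact fun t _ => (hψ t).differentiableAt.differentiableWithinAt
    · intro t ht
      rw [interior_Icc] at ht
      rw [(hψ t).deriv]
      have hinner : ⟪F' (x + t • v) - F' x, v⟫ ≤ L * (t * ‖v‖) * ‖v‖ := by
        refine (real_inner_le_norm _ _).trans ?_
        have h3 : ‖F' (x + t • v) - F' x‖ ≤ L * ‖(x + t • v) - x‖ := hsmooth _ _
        have h4 : ‖(x + t • v) - x‖ = t * ‖v‖ := by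
          rw [add_sub_cancel_left, norm_smul, Real.norm_eq_abs, abs_of_pos ht.1]
        rw [h4] at h3
        exact mul_le_mul_of_nonneg_right h3 (norm_nonneg v)
      rw [inner_sub_left] at hinner
      nlinarith [hinner]
  have h01 : ψ 1 ≤ ψ 0 :=
    hanti (Set.mem_Icc.2 ⟨le_refl 0, zero_le_one⟩) (Set.mem_Icc.2 ⟨zero_le_one, le_refl 1⟩)
      zero_le_one
  have e0 : ψ 0 = F x := by simp [hψdef]
  have e1 : ψ 1 = F y - ⟪F' x, v⟫ - L / 2 * ‖v‖ ^ 2 := by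
    simp [hψdef, hv]
  rw [e0, e1] at h01
  linarith


/-- Interpolation inequality for the convex part `G = F - (lam/2)‖·‖²`. -/
lemma interp_G (F : E → ℝ) (F' : E → E) (lam L : ℝ) (hlamL : lam ≤ L)
    (hdescent : ∀ x y, F y ≤ F x + ⟪F' x, y - x⟫ + L / 2 * ‖y - x‖ ^ 2)
    (hsc : ∀ w w', F w + ⟪F' w, w' - w⟫ + lam / 2 * ‖w' - w‖ ^ 2 ≤ F w')
    (x y : E) :
    ‖(F' y - lam • y) - (F' x - lam • x)‖ ^ 2 ≤
      2 * (L - lam) *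
        ((F y - lam / 2 * ‖y‖ ^ 2) - (F x - lam / 2 * ‖x‖ ^ 2) - ⟪F' x - lam • x, y - x⟫) := by
  set G : E → ℝ := fun z => F z - lam / 2 * ‖z‖ ^ 2 with hG
  set G' : E → E := fun z => F' z - lam • z with hG'
  set M : ℝ := L - lam with hM
  have normid : ∀ a b : E, ‖b‖ ^ 2 - ‖a‖ ^ 2 - 2 * ⟪a, b - a⟫ = ‖b - a‖ ^ 2 := by
    intro a b
    have h1 := norm_sub_sq_real b a
    have h2 : ⟪a, b - a⟫ = ⟪a, b⟫ - ⟪a, a⟫ := inner_sub_right a b a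
    have h3 : ⟪a, a⟫ = ‖a‖ ^ 2 := real_inner_self_eq_norm_sq a
    have h4 : ⟪b, a⟫ = ⟪a, b⟫ := real_inner_comm a b
    rw [h1, h2, h3, h4]; ring
  -- descent lemma for G
  have hGdesc : ∀ a b : E, G b ≤ G a + ⟪G' a, b - a⟫ + M / 2 * ‖b - a‖ ^ 2 := by
    intro a b
    have h1 := hdescent a b
    have h2 : ⟪G' a, b - a⟫ = ⟪F' a, b - a⟫ - lam * ⟪a, b - a⟫ := by
      simp [hG', inner_sub_left, real_inner_smul_left]
    have h3 := normid a b
    simp only [hG, hM]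
    rw [h2]
    have h5 : lam * (‖b‖ ^ 2 - ‖a‖ ^ 2 - 2 * ⟪a, b - a⟫) = lam * ‖b - a‖ ^ 2 := by rw [h3]
    linarith
  -- convexity of G
  have hGconv : ∀ a b : E, G a + ⟪G' a, b - a⟫ ≤ G b := by
    intro a b
    have h1 := hsc a b
    have h2 : ⟪G' a, b - a⟫ = ⟪F' a, b - a⟫ - lam * ⟪a, b - a⟫ := by
      simp [hG', inner_sub_left, real_inner_smul_left]
    have h3 := normid a b
    simp only [hG]
    rw [h2]
    have h5 : lam * (‖b‖ ^ 2 - ‖a‖ ^ 2 - 2 * ⟪a, b - a⟫) = lam * ‖b - a‖ ^ 2 := by rw [h3]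
    linarith
  set q : E := G' y - G' x with hq
  set D : ℝ := G y - G x - ⟪G' x, y - x⟫ with hD
  -- key: ∀ t ≥ 0, t‖q‖² - M t²/2 ‖q‖² ≤ D
  have key : ∀ t : ℝ, t * ‖q‖ ^ 2 - M * t ^ 2 / 2 * ‖q‖ ^ 2 ≤ D := by
    intro t
    set z : E := y - t • q with hz
    have hmin : G x + ⟪G' x, z - x⟫ ≤ G z := hGconv x z
    have hdes : G z ≤ G y + ⟪G' y, z - y⟫ + M / 2 * ‖z - y‖ ^ 2 := hGdesc y z
    have hzy : z - y = -(t • q) := by simp [hz]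
    have e1 : ⟪G' y, z - y⟫ = -(t * ⟪G' y, q⟫) := by
      rw [hzy, inner_neg_right, real_inner_smul_right]
    have e2 : ‖z - y‖ ^ 2 = t ^ 2 * ‖q‖ ^ 2 := by
      rw [hzy, norm_neg, norm_smul, mul_pow, Real.norm_eq_abs, sq_abs]
    have e3 : ⟪G' x, z - x⟫ = ⟪G' x, y - x⟫ - t * ⟪G' x, q⟫ := by
      have : z - x = (y - x) - t • q := by simp [hz]; abel
      rw [this, inner_sub_right, real_inner_smul_right]
    have e4 : ⟪G' y, q⟫ - ⟪G' x, q⟫ = ‖q‖ ^ 2 := by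
      rw [← inner_sub_left, ← hq, real_inner_self_eq_norm_sq]
    rw [e1, e2] at hdes
    rw [e3] at hmin
    have e5 : t * (⟪G' y, q⟫ - ⟪G' x, q⟫) = t * ‖q‖ ^ 2 := by rw [e4]
    have e6 : t * ⟪G' y, q⟫ - t * ⟪G' x, q⟫ = t * ‖q‖ ^ 2 := by linarith [e5, mul_sub t ⟪G' y, q⟫ ⟪G' x, q⟫]
    clear_value G G' M q D z
    rw [hD]
    linarith [hmin, hdes, e6]
  show ‖q‖ ^ 2 ≤ 2 * M * D
  have hM0 : 0 ≤ M := by simp [hM]; linarith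
  rcases eq_or_lt_of_le hM0 with hMeq | hMpos
  · -- M = 0 : conclude ‖q‖² = 0
    have hq0 : ‖q‖ ^ 2 ≤ 0 := by
      by_contra hpos
      push_neg at hpos
      have ht := key ((D + 1) / ‖q‖ ^ 2)
      rw [← hMeq] at ht
      have : (D + 1) / ‖q‖ ^ 2 * ‖q‖ ^ 2 = D + 1 := by
        exact div_mul_cancel₀ _ (ne_of_gt hpos)
      linarith [ht, this]
    rw [← hMeq]
    nlinarith [hq0]
  · have ht := key (1 / M)
    have h1 : (1 / M) * ‖q‖ ^ 2 - M * (1 / M) ^ 2 / 2 * ‖q‖ ^ 2 = ‖q‖ ^ 2 / (2 * M) := by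
      field_simp
      ring
    rw [h1] at ht
    calc ‖q‖ ^ 2 = (‖q‖ ^ 2 / (2 * M)) * (2 * M) := by field_simp
    _ ≤ D * (2 * M) := by
        apply mul_le_mul_of_nonneg_right ht
        linarith
    _ = 2 * M * D := by ring


/-- Variational inequality for a nearest-point map onto a convex set. -/
lemma proj_inner_le (W : Set E) (hWconv : Convex ℝ W)
    (x p : E) (hpW : p ∈ W) (hmin : ∀ y ∈ W, ‖x - p‖ ≤ ‖x - y‖)
    (y : E) (hyW : y ∈ W) : ⟪x - p, y - p⟫ ≤ 0 := by
  by_contra hc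
  push_neg at hc
  set c : ℝ := ⟪x - p, y - p⟫ with hcdef
  have hn2 : (0:ℝ) < ‖y - p‖ ^ 2 := by
    rcases eq_or_ne y p with rfl | hne
    · rw [hcdef, sub_self, inner_zero_right] at hc
      exact absurd hc (lt_irrefl 0)
    · exact pow_pos (norm_pos_iff.2 (sub_ne_zero.2 hne)) 2
  set t : ℝ := min 1 (c / ‖y - p‖ ^ 2) with ht
  have ht0 : 0 < t := lt_min one_pos (div_pos hc hn2)
  have ht1 : t ≤ 1 := min_le_left _ _
  have htc : t * ‖y - p‖ ^ 2 ≤ c := by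
    have := min_le_right 1 (c / ‖y - p‖ ^ 2)
    calc t * ‖y - p‖ ^ 2 ≤ (c / ‖y - p‖ ^ 2) * ‖y - p‖ ^ 2 :=
          mul_le_mul_of_nonneg_right this (le_of_lt hn2)
    _ = c := div_mul_cancel₀ _ (ne_of_gt hn2)
  have hzW : p + t • (y - p) ∈ W := by
    have := hWconv hpW hyW (by linarith : (0:ℝ) ≤ 1 - t) (le_of_lt ht0) (by ring)
    convert this using 1
    module
  have hd := hmin _ hzW
  have hexp : ‖x - (p + t • (y - p))‖ ^ 2
      = ‖x - p‖ ^ 2 - 2 * t * c + t ^ 2 * ‖y - p‖ ^ 2 := by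
    have h1 : x - (p + t • (y - p)) = (x - p) - t • (y - p) := by abel
    rw [h1, norm_sub_sq_real, real_inner_smul_right, norm_smul, Real.norm_eq_abs, mul_pow,
      sq_abs, ← hcdef]
    ring
  have hsq : ‖x - p‖ ^ 2 ≤ ‖x - (p + t • (y - p))‖ ^ 2 := by
    have := hd
    nlinarith [norm_nonneg (x - p), norm_nonneg (x - (p + t • (y - p)))]
  rw [hexp] at hsq
  -- 2 t c ≤ t² ‖y-p‖² ≤ t * c  (since t‖y-p‖² ≤ c), so t c ≤ 0, contradiction
  have h2 : t ^ 2 * ‖y - p‖ ^ 2 ≤ t * c := by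
    have : t * (t * ‖y - p‖ ^ 2) ≤ t * c := mul_le_mul_of_nonneg_left htc (le_of_lt ht0)
    nlinarith [this]
  nlinarith [mul_pos ht0 hc]
end Aux

set_option maxHeartbeats 1600000 in
/-- A projected inexact gradient step with step size `1/L` on a
`lam`-strongly convex, `L`-smooth function, using a vector `g` that is `Δ`-close
to the true gradient, contracts the distance to the stationary point `wstar ∈ W`
up to the additive error `Δ/L`.  Here `proj` is the Euclidean projection onto
the nonempty closed convex set `W`, characterized by its defining property. -/
theorem projected_inexact_gradient_step {d : ℕ}
    (W : Set (EuclideanSpace ℝ (Fin d))) (hWne : W.Nonempty)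
    (hWclosed : IsClosed W) (hWconv : Convex ℝ W)
    (proj : EuclideanSpace ℝ (Fin d) → EuclideanSpace ℝ (Fin d))
    (hproj : ∀ x, proj x ∈ W ∧ ∀ y ∈ W, ‖x - proj x‖ ≤ ‖x - y‖)
    (F : EuclideanSpace ℝ (Fin d) → ℝ)
    (F' : EuclideanSpace ℝ (Fin d) → EuclideanSpace ℝ (Fin d))
    (lam L : ℝ) (hlam : 0 < lam) (hlamL : lam ≤ L)
    (hgrad : ∀ w, HasGradientAt F (F' w) w)
    (hsmooth : ∀ w w', ‖F' w - F' w'‖ ≤ L * ‖w - w'‖)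
    (hsc : ∀ w w', F w + ⟪F' w, w' - w⟫ + lam / 2 * ‖w' - w‖ ^ 2 ≤ F w')
    (wstar : EuclideanSpace ℝ (Fin d)) (hwstarW : wstar ∈ W) (hstar : F' wstar = 0)
    (w g : EuclideanSpace ℝ (Fin d)) (Δ : ℝ) (hg : ‖g - F' w‖ ≤ Δ) :
    ‖proj (w - (1 / L) • g) - wstar‖ ≤ (1 - lam / (L + lam)) * ‖w - wstar‖ + Δ / L := by
  have hL : (0:ℝ) < L := lt_of_lt_of_le hlam hlamL
  have hA : (0:ℝ) < L + lam := by linarith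
  set u0 : EuclideanSpace ℝ (Fin d) := w - (1 / L) • g with hu0
  set q0 : EuclideanSpace ℝ (Fin d) := proj u0 with hq0
  set u : EuclideanSpace ℝ (Fin d) := w - wstar with hu
  set p : EuclideanSpace ℝ (Fin d) := F' w with hp
  -- Step 1: projection is nonexpansive towards `wstar ∈ W`
  have hvi : ⟪u0 - q0, wstar - q0⟫ ≤ 0 :=
    proj_inner_le W hWconv u0 q0 (hproj u0).1 (hproj u0).2 wstar hwstarW
  clear_value u0 q0 u p
  have step1 : ‖q0 - wstar‖ ≤ ‖u0 - wstar‖ := by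
    have e : q0 - wstar = (q0 - u0) + (u0 - wstar) := by abel
    have h1 : ‖q0 - wstar‖ ^ 2 = ⟪q0 - u0, q0 - wstar⟫ + ⟪u0 - wstar, q0 - wstar⟫ := by
      rw [← real_inner_self_eq_norm_sq]
      nth_rw 1 [e]
      exact inner_add_left _ _ _
    have h2 : ⟪q0 - u0, q0 - wstar⟫ = ⟪u0 - q0, wstar - q0⟫ := by
      rw [show q0 - u0 = -(u0 - q0) by abel, show q0 - wstar = -(wstar - q0) by abel,
        inner_neg_neg]
    have h3 : ⟪u0 - wstar, q0 - wstar⟫ ≤ ‖u0 - wstar‖ * ‖q0 - wstar‖ :=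
      real_inner_le_norm _ _
    nlinarith [norm_nonneg (q0 - wstar), norm_nonneg (u0 - wstar), h1, h2, h3, hvi]
  -- Step 2: co-coercivity
  have hdesc : ∀ x y, F y ≤ F x + ⟪F' x, y - x⟫ + L / 2 * ‖y - x‖ ^ 2 :=
    descent_lemma F F' L hgrad hsmooth
  set q : EuclideanSpace ℝ (Fin d) := p - lam • u with hqdef
  clear_value q
  have hq1 : (F' w - lam • w) - (F' wstar - lam • wstar) = q := by
    rw [hstar, hqdef, hp, hu]
    module
  have hq2 : (F' wstar - lam • wstar) - (F' w - lam • w) = -q := by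
    rw [← hq1]; abel
  have i1 := interp_G F F' lam L hlamL hdesc hsc wstar w
  have i2 := interp_G F F' lam L hlamL hdesc hsc w wstar
  rw [hq1] at i1
  rw [hq2, norm_neg] at i2
  have hip1 : ⟪F' wstar - lam • wstar, w - wstar⟫ = -⟪q, u⟫ + ⟪F' w - lam • w, w - wstar⟫ := by
    rw [← hq1, hu]
    simp only [inner_sub_left]
    ring
  have hip2 : ⟪F' w - lam • w, wstar - w⟫ = -⟪F' w - lam • w, w - wstar⟫ := by
    rw [show wstar - w = -(w - wstar) by abel, inner_neg_right]
  have key : ‖q‖ ^ 2 ≤ (L - lam) * ⟪q, u⟫ := by nlinarith [i1, i2, hip1, hip2]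
  -- scalar quantities
  set r : ℝ := ‖u‖ with hr
  set s : ℝ := ‖p‖ with hs
  set a : ℝ := ⟪p, u⟫ with ha
  clear_value r s a
  have hq_norm : ‖q‖ ^ 2 = s ^ 2 - 2 * lam * a + lam ^ 2 * r ^ 2 := by
    rw [hqdef, norm_sub_sq_real, real_inner_smul_right, norm_smul, Real.norm_eq_abs, mul_pow,
      sq_abs, ← hs, ← hr, ← ha]
    ring
  have hqu : ⟪q, u⟫ = a - lam * r ^ 2 := by
    rw [hqdef, inner_sub_left, real_inner_smul_left, real_inner_self_eq_norm_sq, ← hr, ← ha]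
  rw [hq_norm, hqu] at key
  have key2 : s ^ 2 + lam * L * r ^ 2 ≤ (L + lam) * a := by linarith [key]
  have hsLr : s ≤ L * r := by
    have := hsmooth w wstar
    rw [hstar, sub_zero] at this
    rw [hs, hr, hp, hu]
    exact this
  have hr0 : 0 ≤ r := by rw [hr]; exact norm_nonneg u
  have hs0 : 0 ≤ s := by rw [hs]; exact norm_nonneg p
  have hs2 : s ^ 2 ≤ L ^ 2 * r ^ 2 := by nlinarith [hsLr, hr0, hs0]
  -- Step 3: contraction of the exact gradient step
  have hfac : 0 ≤ 1 - lam / (L + lam) := by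
    rw [sub_nonneg, div_le_one hA]; linarith
  have hexp : ‖u - (1 / L) • p‖ ^ 2 = r ^ 2 - 2 * (1 / L) * a + (1 / L) ^ 2 * s ^ 2 := by
    rw [norm_sub_sq_real, real_inner_smul_right, norm_smul, Real.norm_eq_abs, mul_pow, sq_abs,
      real_inner_comm p u, ← hs, ← hr, ← ha]
    ring
  have contr_sq : ‖u - (1 / L) • p‖ ^ 2 ≤ ((1 - lam / (L + lam)) * r) ^ 2 := by
    rw [hexp, show (1:ℝ) - lam / (L + lam) = L / (L + lam) by field_simp; ring]
    have hpos : (0:ℝ) < L ^ 2 * (L + lam) ^ 2 := by positivity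
    rw [← mul_le_mul_iff_right₀ hpos]
    have e1 : L ^ 2 * (L + lam) ^ 2 * (r ^ 2 - 2 * (1 / L) * a + (1 / L) ^ 2 * s ^ 2)
        = L ^ 2 * (L + lam) ^ 2 * r ^ 2 - 2 * L * (L + lam) ^ 2 * a + (L + lam) ^ 2 * s ^ 2 := by
      field_simp
    have e2 : L ^ 2 * (L + lam) ^ 2 * ((L / (L + lam) * r) ^ 2) = L ^ 4 * r ^ 2 := by
      field_simp
    rw [e1, e2]
    have hmul : 2 * L * (L + lam) * (s ^ 2 + lam * L * r ^ 2)
        ≤ 2 * L * (L + lam) * ((L + lam) * a) := by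
      apply mul_le_mul_of_nonneg_left key2
      positivity
    nlinarith [hmul, hs2, sq_nonneg lam, sq_nonneg s,
      mul_nonneg (sq_nonneg lam) (by nlinarith : (0:ℝ) ≤ L ^ 2 * r ^ 2 - s ^ 2)]
  have contr : ‖u - (1 / L) • p‖ ≤ (1 - lam / (L + lam)) * r := by
    nlinarith [contr_sq, norm_nonneg (u - (1 / L) • p), mul_nonneg hfac hr0]
  -- Step 4: assemble
  have hsplit : u0 - wstar = (u - (1 / L) • p) - (1 / L) • (g - p) := by
    rw [hu0, hu, hp]
    module
  have hgp : ‖(1 / L) • (g - p)‖ ≤ Δ / L := by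
    rw [norm_smul, Real.norm_eq_abs, abs_of_pos (by positivity : (0:ℝ) < 1 / L)]
    rw [div_eq_mul_inv Δ L, mul_comm Δ L⁻¹, one_div]
    exact mul_le_mul_of_nonneg_left hg (by positivity)
  calc ‖q0 - wstar‖ ≤ ‖u0 - wstar‖ := step1
  _ ≤ ‖u - (1 / L) • p‖ + ‖(1 / L) • (g - p)‖ := by rw [hsplit]; exact norm_sub_le _ _
  _ ≤ (1 - lam / (L + lam)) * r + Δ / L := add_le_add contr hgp
end

section
/- Let W ⊆ ℝ^d be nonempty, closed and convex, let F : ℝ^d → ℝ be differentiable, λ-strongly convex and L-smooth with 0 < λ ≤ L, and let w* ∈ W satisfy ∇F(w*) = 0. Let Δ ≥ 0, let w⁰ ∈ W, and define w^{t+1} = Π_W(w^t − (1/L)g^t) where g^0, g^1, … are any vectors satisfying ‖g^t − ∇F(w^t)‖₂ ≤ Δ for every t. Then for every T ≥ 0, ‖w^T − w*‖₂ ≤ (1 − λ/(L+λ))^T · ‖w⁰ − w*‖₂ + (2/λ)·Δ. -/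
open scoped RealInnerProductSpace

theorem pigd_descent {d : ℕ}
    (F : EuclideanSpace ℝ (Fin d) → ℝ)
    (F' : EuclideanSpace ℝ (Fin d) → EuclideanSpace ℝ (Fin d))
    (L : ℝ)
    (hgrad : ∀ w, HasGradientAt F (F' w) w)
    (hsmooth : ∀ w w', ‖F' w - F' w'‖ ≤ L * ‖w - w'‖) :
    ∀ x y, F y ≤ F x + ⟪F' x, y - x⟫ + L / 2 * ‖y - x‖ ^ 2 := by
  intro x y
  set δ := y - x with hδ
  set φ : ℝ → ℝ := fun t => F (x + t • δ) - t * ⟪F' x, δ⟫ - L / 2 * t ^ 2 * ‖δ‖ ^ 2 with hφ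
  have hd : ∀ t : ℝ, HasDerivAt φ (⟪F' (x + t • δ), δ⟫ - ⟪F' x, δ⟫ - L * t * ‖δ‖ ^ 2) t := by
    intro t
    have hc : HasDerivAt (fun t : ℝ => x + t • δ) δ t := by
      simpa using ((hasDerivAt_id t).smul_const δ).const_add x
    have h1 : HasDerivAt (fun t : ℝ => F (x + t • δ)) ⟪F' (x + t • δ), δ⟫ t := by
      have := (hgrad (x + t • δ)).hasFDerivAt.comp_hasDerivAt t hc
      simp at this
      exact this
    have h2 : HasDerivAt (fun t : ℝ => t * ⟪F' x, δ⟫) ⟪F' x, δ⟫ t := by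
      simpa using (hasDerivAt_id t).mul_const ⟪F' x, δ⟫
    have h3 : HasDerivAt (fun t : ℝ => L / 2 * t ^ 2 * ‖δ‖ ^ 2)
        (L * t * ‖δ‖ ^ 2) t := by
      have := ((hasDerivAt_pow 2 t).const_mul (L / 2)).mul_const (‖δ‖ ^ 2)
      refine this.congr_deriv ?_
      ring
    exact (h1.sub h2).sub h3
  have hanti : AntitoneOn φ (Set.Icc 0 1) := by
    apply antitoneOn_of_deriv_nonpos (convex_Icc 0 1)
    · exact fun t _ => (hd t).continuousAt.continuousWithinAt
    · exact fun t _ => (hd t).differentiableAt.differentiableWithinAt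
    · intro t ht
      rw [interior_Icc] at ht
      rw [(hd t).deriv]
      have hb : ⟪F' (x + t • δ) - F' x, δ⟫ ≤ L * t * ‖δ‖ ^ 2 := by
        calc ⟪F' (x + t • δ) - F' x, δ⟫ ≤ ‖F' (x + t • δ) - F' x‖ * ‖δ‖ :=
              real_inner_le_norm _ _
          _ ≤ L * ‖(x + t • δ) - x‖ * ‖δ‖ := by
              gcongr; exact hsmooth _ _
          _ = L * t * ‖δ‖ ^ 2 := by
              rw [add_sub_cancel_left, norm_smul, Real.norm_eq_abs,
                abs_of_pos ht.1]
              ring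
      rw [inner_sub_left] at hb
      linarith
  have key := hanti (Set.mem_Icc.mpr ⟨le_refl 0, zero_le_one⟩)
      (Set.mem_Icc.mpr ⟨zero_le_one, le_refl 1⟩) zero_le_one
  simp only [hφ, one_smul, zero_smul, add_zero] at key
  have hxy : x + δ = y := by rw [hδ]; abel
  rw [hxy] at key
  linarith


theorem pigd_proj {d : ℕ}
    {W : Set (EuclideanSpace ℝ (Fin d))} (hWconv : Convex ℝ W)
    (proj : EuclideanSpace ℝ (Fin d) → EuclideanSpace ℝ (Fin d))
    (hproj : ∀ x, proj x ∈ W ∧ ∀ y ∈ W, ‖x - proj x‖ ≤ ‖x - y‖)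
    {z : EuclideanSpace ℝ (Fin d)} (hz : z ∈ W) (x : EuclideanSpace ℝ (Fin d)) :
    ‖proj x - z‖ ≤ ‖x - z‖ := by
  obtain ⟨hmem, hmin⟩ := hproj x
  haveI : Nonempty ↑W := ⟨⟨proj x, hmem⟩⟩
  have hinf : ‖x - proj x‖ = ⨅ w : W, ‖x - w‖ := by
    have hbdd : BddBelow (Set.range fun w : W => ‖x - ↑w‖) := by
      refine ⟨0, ?_⟩
      rintro y ⟨w, rfl⟩
      exact norm_nonneg _
    refine le_antisymm (le_ciInf fun w => hmin w w.2) ?_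
    exact ciInf_le hbdd ⟨proj x, hmem⟩
  have hVI := (norm_eq_iInf_iff_real_inner_le_zero hWconv hmem).mp hinf z hz
  have h1 : ⟪proj x - z, proj x - z⟫ = ⟪proj x - x, proj x - z⟫ + ⟪x - z, proj x - z⟫ := by
    rw [← inner_add_left]; congr 1; abel
  have h2 : ⟪proj x - x, proj x - z⟫ ≤ 0 := by
    have : ⟪proj x - x, proj x - z⟫ = ⟪x - proj x, z - proj x⟫ := by
      rw [← inner_neg_neg]; congr 1 <;> abel
    rw [this]; exact hVI
  have h3 : ⟪x - z, proj x - z⟫ ≤ ‖x - z‖ * ‖proj x - z‖ := real_inner_le_norm _ _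
  have h4 : ‖proj x - z‖ ^ 2 ≤ ‖x - z‖ * ‖proj x - z‖ := by
    rw [← real_inner_self_eq_norm_sq]; linarith
  rcases eq_or_lt_of_le (norm_nonneg (proj x - z)) with h | h
  · rw [← h]; exact norm_nonneg _
  · nlinarith [h4]


theorem pigd_key {d : ℕ}
    (F : EuclideanSpace ℝ (Fin d) → ℝ)
    (F' : EuclideanSpace ℝ (Fin d) → EuclideanSpace ℝ (Fin d))
    (lam L : ℝ) (hlam : 0 < lam) (hlamL : lam ≤ L)
    (hdescent : ∀ x y, F y ≤ F x + ⟪F' x, y - x⟫ + L / 2 * ‖y - x‖ ^ 2)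
    (hsc : ∀ w w', F w + ⟪F' w, w' - w⟫ + lam / 2 * ‖w' - w‖ ^ 2 ≤ F w')
    (wstar : EuclideanSpace ℝ (Fin d)) (hstar : F' wstar = 0)
    (x : EuclideanSpace ℝ (Fin d)) :
    ‖x - (1 / L) • F' x - wstar‖ ≤ L / (L + lam) * ‖x - wstar‖ := by
  have hL : 0 < L := lt_of_lt_of_le hlam hlamL
  set u := x - wstar with hu
  set v := F' x with hv
  set p := v - lam • u with hp
  set M := L - lam with hM
  have hvp : v = p + lam • u := by rw [hp]; abel
  have claim : ∀ t : ℝ, 0 ≤ t → (2 * t - M * t ^ 2) * ‖p‖ ^ 2 ≤ ⟪p, u⟫ := by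
    intro t ht
    set z := wstar + t • p with hz
    set z' := x - t • p with hz'
    have hI := hsc x z
    have hII := hsc wstar z'
    have hDz := hdescent wstar z
    have hDz' := hdescent x z'
    rw [hstar] at hDz hII
    rw [inner_zero_left] at hDz hII
    have hzx : z - x = t • p - u := by rw [hz, hu]; abel
    have hzw : z - wstar = t • p := by rw [hz]; abel
    have hz'w : z' - wstar = u - t • p := by rw [hz', hu]; abel
    have hz'x : z' - x = -(t • p) := by rw [hz']; abel
    have e1 : ⟪v, z - x⟫ = t * ⟪p, v⟫ - ⟪v, u⟫ := by
      rw [hzx, inner_sub_right, real_inner_smul_right, real_inner_comm p v]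
    have e2 : ‖z - x‖ ^ 2 = t ^ 2 * ‖p‖ ^ 2 - 2 * t * ⟪p, u⟫ + ‖u‖ ^ 2 := by
      rw [hzx, @norm_sub_sq_real, norm_smul, real_inner_smul_left, Real.norm_eq_abs,
        mul_pow, sq_abs]
      ring
    have e3 : ‖z - wstar‖ ^ 2 = t ^ 2 * ‖p‖ ^ 2 := by
      rw [hzw, norm_smul, Real.norm_eq_abs, mul_pow, sq_abs]
    have e4 : ‖z' - wstar‖ ^ 2 = ‖u‖ ^ 2 - 2 * t * ⟪p, u⟫ + t ^ 2 * ‖p‖ ^ 2 := by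
      rw [hz'w, @norm_sub_sq_real, norm_smul, real_inner_smul_right, Real.norm_eq_abs,
        mul_pow, sq_abs, real_inner_comm u p]
      ring
    have e5 : ⟪v, z' - x⟫ = -(t * ⟪p, v⟫) := by
      rw [hz'x, inner_neg_right, real_inner_smul_right, real_inner_comm p v]
    have e6 : ‖z' - x‖ ^ 2 = t ^ 2 * ‖p‖ ^ 2 := by
      rw [hz'x, norm_neg, norm_smul, Real.norm_eq_abs, mul_pow, sq_abs]
    have e7 : ⟪p, v⟫ = ‖p‖ ^ 2 + lam * ⟪p, u⟫ := by
      rw [hvp, inner_add_right, real_inner_smul_right, real_inner_self_eq_norm_sq]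
    have e8 : ⟪v, u⟫ = ⟪p, u⟫ + lam * ‖u‖ ^ 2 := by
      rw [hvp, inner_add_left, real_inner_smul_left, real_inner_self_eq_norm_sq]
    rw [e1, e2] at hI
    rw [e4] at hII
    rw [e3] at hDz
    rw [e5, e6] at hDz'
    rw [e7] at hI hDz'
    rw [e8] at hI
    rw [hM]
    linarith [hI, hII, hDz, hDz']
  have hQ0 : 0 ≤ ⟪p, u⟫ := by
    have := claim 0 le_rfl
    simpa using this
  have hP : ‖p‖ ^ 2 ≤ M * ⟪p, u⟫ := by
    rcases eq_or_lt_of_le hlamL with heq | hlt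
    · have hM0 : M = 0 := by rw [hM, ← heq]; ring
      rw [hM0, zero_mul]
      by_contra hpos
      push_neg at hpos
      have hkey := claim ((⟪p, u⟫ + 1) / (2 * ‖p‖ ^ 2)) (by positivity)
      rw [hM0] at hkey
      have : (2 * ((⟪p, u⟫ + 1) / (2 * ‖p‖ ^ 2)) - 0 * ((⟪p, u⟫ + 1) / (2 * ‖p‖ ^ 2)) ^ 2)
          * ‖p‖ ^ 2 = ⟪p, u⟫ + 1 := by
        have hp0 : ‖p‖ ≠ 0 := by intro h; rw [h] at hpos; norm_num at hpos
        field_simp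
        ring
      rw [this] at hkey
      linarith
    · have hMpos : 0 < M := by rw [hM]; linarith
      have hkey := claim (1 / M) (by positivity)
      have : (2 * (1 / M) - M * (1 / M) ^ 2) * ‖p‖ ^ 2 = ‖p‖ ^ 2 / M := by
        field_simp
        ring
      rw [this] at hkey
      rw [div_le_iff₀ hMpos] at hkey
      linarith [hkey]
  have hvec : x - (1 / L) • v - wstar = (M / L) • u - (1 / L) • p := by
    rw [hp, hM, hu]
    match_scalars <;> field_simp <;> ring
  have hnorm2 : ‖x - (1 / L) • v - wstar‖ ^ 2 ≤ (M / L) ^ 2 * ‖u‖ ^ 2 := by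
    have hMnn : (0:ℝ) ≤ M := by rw [hM]; linarith
    rw [hvec, @norm_sub_sq_real, norm_smul, norm_smul, real_inner_smul_left,
      real_inner_smul_right, Real.norm_eq_abs, Real.norm_eq_abs, mul_pow, mul_pow,
      sq_abs, sq_abs, real_inner_comm p u]
    have h1 : (1 / L) ^ 2 * ‖p‖ ^ 2 ≤ (1 / L) ^ 2 * (M * ⟪p, u⟫) :=
      mul_le_mul_of_nonneg_left hP (by positivity)
    have hc : ⟪u, p⟫ = ⟪p, u⟫ := real_inner_comm p u
    have h2 : (0:ℝ) ≤ M * ⟪p, u⟫ * (1 / L) ^ 2 :=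
      mul_nonneg (mul_nonneg hMnn hQ0) (by positivity)
    ring_nf at h1 h2 ⊢
    linarith [h1, h2]
  have hMle : M / L ≤ L / (L + lam) := by
    rw [div_le_div_iff₀ hL (by linarith)]
    rw [hM]
    nlinarith [sq_nonneg lam]
  have hfinal : ‖x - (1 / L) • v - wstar‖ ≤ (M / L) * ‖u‖ := by
    have hML : 0 ≤ M / L := by
      apply div_nonneg _ hL.le
      rw [hM]; linarith
    refine le_of_pow_le_pow_left₀ two_ne_zero (by positivity) ?_
    calc ‖x - (1 / L) • v - wstar‖ ^ 2 ≤ (M / L) ^ 2 * ‖u‖ ^ 2 := hnorm2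
      _ = ((M / L) * ‖u‖) ^ 2 := by ring
  calc ‖x - (1 / L) • v - wstar‖ ≤ (M / L) * ‖u‖ := hfinal
    _ ≤ L / (L + lam) * ‖u‖ := by
        apply mul_le_mul_of_nonneg_right hMle (norm_nonneg _)

/-- Projected inexact gradient descent with step size `1/L` on a
`lam`-strongly convex, `L`-smooth function, where each gradient estimate `g t`
is within `Δ` of the true gradient, converges linearly to the stationary point
`wstar ∈ W` up to the error floor `(2/lam) · Δ`. -/
theorem projected_inexact_gradient_descent {d : ℕ}
    (W : Set (EuclideanSpace ℝ (Fin d))) (hWne : W.Nonempty)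
    (hWclosed : IsClosed W) (hWconv : Convex ℝ W)
    (proj : EuclideanSpace ℝ (Fin d) → EuclideanSpace ℝ (Fin d))
    (hproj : ∀ x, proj x ∈ W ∧ ∀ y ∈ W, ‖x - proj x‖ ≤ ‖x - y‖)
    (F : EuclideanSpace ℝ (Fin d) → ℝ)
    (F' : EuclideanSpace ℝ (Fin d) → EuclideanSpace ℝ (Fin d))
    (lam L : ℝ) (hlam : 0 < lam) (hlamL : lam ≤ L)
    (hgrad : ∀ w, HasGradientAt F (F' w) w)
    (hsmooth : ∀ w w', ‖F' w - F' w'‖ ≤ L * ‖w - w'‖)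
    (hsc : ∀ w w', F w + ⟪F' w, w' - w⟫ + lam / 2 * ‖w' - w‖ ^ 2 ≤ F w')
    (wstar : EuclideanSpace ℝ (Fin d)) (hwstarW : wstar ∈ W) (hstar : F' wstar = 0)
    (Δ : ℝ) (hΔ : 0 ≤ Δ)
    (w : ℕ → EuclideanSpace ℝ (Fin d)) (g : ℕ → EuclideanSpace ℝ (Fin d))
    (hw0 : w 0 ∈ W)
    (hg : ∀ t, ‖g t - F' (w t)‖ ≤ Δ)
    (hiter : ∀ t, w (t + 1) = proj (w t - (1 / L) • g t)) :
    ∀ T : ℕ, ‖w T - wstar‖ ≤ (1 - lam / (L + lam)) ^ T * ‖w 0 - wstar‖ + (2 / lam) * Δ := by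
  have hL : 0 < L := lt_of_lt_of_le hlam hlamL
  have hLlam : 0 < L + lam := by linarith
  have hdescent := pigd_descent F F' L hgrad hsmooth
  have hkey := pigd_key F F' lam L hlam hlamL hdescent hsc wstar hstar
  have hrho : 1 - lam / (L + lam) = L / (L + lam) := by field_simp; ring
  have hρnn : (0:ℝ) ≤ L / (L + lam) := by positivity
  have step : ∀ t, ‖w (t + 1) - wstar‖ ≤ L / (L + lam) * ‖w t - wstar‖ + Δ / L := by
    intro t
    rw [hiter t]
    have h1 : ‖proj (w t - (1 / L) • g t) - wstar‖ ≤ ‖w t - (1 / L) • g t - wstar‖ :=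
      pigd_proj hWconv proj hproj hwstarW _
    have h2 : w t - (1 / L) • g t - wstar
        = (w t - (1 / L) • F' (w t) - wstar) + (1 / L) • (F' (w t) - g t) := by
      module
    have h3 : ‖(1 / L) • (F' (w t) - g t)‖ ≤ Δ / L := by
      rw [norm_smul, Real.norm_eq_abs, abs_of_pos (by positivity : (0:ℝ) < 1 / L),
        norm_sub_rev]
      calc 1 / L * ‖g t - F' (w t)‖ ≤ 1 / L * Δ := by
            apply mul_le_mul_of_nonneg_left (hg t) (by positivity)
        _ = Δ / L := by ring
    calc ‖proj (w t - (1 / L) • g t) - wstar‖ ≤ ‖w t - (1 / L) • g t - wstar‖ := h1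
      _ = ‖(w t - (1 / L) • F' (w t) - wstar) + (1 / L) • (F' (w t) - g t)‖ := by rw [h2]
      _ ≤ ‖w t - (1 / L) • F' (w t) - wstar‖ + ‖(1 / L) • (F' (w t) - g t)‖ :=
          norm_add_le _ _
      _ ≤ L / (L + lam) * ‖w t - wstar‖ + Δ / L := add_le_add (hkey _) h3
  intro T
  induction T with
  | zero =>
    have h0 : (0:ℝ) ≤ 2 / lam * Δ := by positivity
    simp only [pow_zero, one_mul]
    linarith
  | succ n ih =>
    rw [hrho] at ih ⊢
    have hs := step n
    have hmul := mul_le_mul_of_nonneg_left ih hρnn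
    have h1 : Δ / L ≤ 2 * Δ / (L + lam) := by
      rw [div_le_div_iff₀ hL hLlam]
      nlinarith [mul_le_mul_of_nonneg_left hlamL hΔ]
    have h2 : L / (L + lam) * (2 / lam * Δ) + 2 * Δ / (L + lam) = 2 / lam * Δ := by
      field_simp
    calc ‖w (n + 1) - wstar‖ ≤ L / (L + lam) * ‖w n - wstar‖ + Δ / L := hs
      _ ≤ L / (L + lam) * ((L / (L + lam)) ^ n * ‖w 0 - wstar‖ + 2 / lam * Δ) + Δ / L := by
          linarith [hmul]
      _ = (L / (L + lam)) ^ (n + 1) * ‖w 0 - wstar‖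
          + (L / (L + lam) * (2 / lam * Δ) + Δ / L) := by ring
      _ ≤ (L / (L + lam)) ^ (n + 1) * ‖w 0 - wstar‖ + 2 / lam * Δ := by linarith
end

section
/- Let p be a probability measure on ℝ^d with finite second moment and ‖Cov_p‖₂ ≤ σ², let ε ∈ [0, 1), and let r be a probability measure on ℝ^d satisfying r(A) ≤ p(A)/(1 − ε) for every measurable set A. Then r has finite second moment and ‖μ_r − μ_p‖₂ ≤ σ·√(ε/(1 − ε)). -/
open MeasureTheory
open scoped RealInnerProductSpace ENNReal

variable {α : Type*} [MeasurableSpace α] {μ : Measure α}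

lemma l2norm_sq {f : α → ℝ} (hf : MemLp f 2 μ) :
    ‖hf.toLp f‖ ^ 2 = ∫ x, f x ^ 2 ∂μ := by
  rw [← real_inner_self_eq_norm_sq, L2.inner_def]
  refine integral_congr_ae ?_
  filter_upwards [hf.coeFn_toLp] with x hx
  rw [hx]
  simp [RCLike.inner_apply, conj_trivial, sq]

lemma cs_integral {f h : α → ℝ} (hf : MemLp f 2 μ) (hh : MemLp h 2 μ) (a b : ℝ)
    (ha : 0 ≤ a) (hb : 0 ≤ b)
    (hfa : ∫ x, f x ^ 2 ∂μ ≤ a ^ 2) (hhb : ∫ x, h x ^ 2 ∂μ ≤ b ^ 2) :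
    ∫ x, f x * h x ∂μ ≤ a * b := by
  set F := hf.toLp f
  set H := hh.toLp h
  have h1 : ∫ x, f x * h x ∂μ = ⟪F, H⟫ := by
    rw [L2.inner_def]
    refine integral_congr_ae ?_
    filter_upwards [hf.coeFn_toLp, hh.coeFn_toLp] with x hx hy
    rw [hx, hy]
    simp [RCLike.inner_apply, conj_trivial]; ring
  have hF : ‖F‖ ≤ a := by
    have := l2norm_sq hf
    nlinarith [norm_nonneg F]
  have hH : ‖H‖ ≤ b := by
    have := l2norm_sq hh
    nlinarith [norm_nonneg H]
  calc ∫ x, f x * h x ∂μ = ⟪F, H⟫ := h1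
    _ ≤ ‖F‖ * ‖H‖ := real_inner_le_norm F H
    _ ≤ a * b := mul_le_mul hF hH (norm_nonneg _) ha


/-- If `p` has finite second moment and covariance with
spectral norm at most `σ²` (expressed through the quadratic form
`v ↦ E_p[⟪v, x − μ_p⟫²]` over unit directions `v`), and `r` is a probability
measure with `r(A) ≤ p(A)/(1−ε)` for all measurable `A`, then `r` has finite
second moment and `‖μ_r − μ_p‖ ≤ σ·√(ε/(1−ε))`. -/
theorem mean_shift_of_domination {d : ℕ}
    (p r : Measure (EuclideanSpace ℝ (Fin d)))
    (hp : IsProbabilityMeasure p) (hr : IsProbabilityMeasure r)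
    (σ ε : ℝ) (hσ : 0 ≤ σ) (hε0 : 0 ≤ ε) (hε1 : ε < 1)
    (hp2 : Integrable (fun x => ‖x‖ ^ 2) p)
    (hp1 : Integrable (fun x => x) p)
    (hcov : ∀ v : EuclideanSpace ℝ (Fin d), ‖v‖ ≤ 1 →
      ∫ x, ⟪v, x - ∫ y, y ∂p⟫ ^ 2 ∂p ≤ σ ^ 2)
    (hdom : ∀ A : Set (EuclideanSpace ℝ (Fin d)), MeasurableSet A →
      r A ≤ p A / ENNReal.ofReal (1 - ε)) :
    Integrable (fun x => ‖x‖ ^ 2) r ∧ Integrable (fun x => x) r ∧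
      ‖(∫ y, y ∂r) - ∫ y, y ∂p‖ ≤ σ * Real.sqrt (ε / (1 - ε)) := by
  have h1ε : (0:ℝ) < 1 - ε := by linarith
  set c : ℝ≥0∞ := (ENNReal.ofReal (1 - ε))⁻¹ with hc
  have hofR : ENNReal.ofReal (1 - ε) ≠ 0 := by
    simp only [ne_eq, ENNReal.ofReal_eq_zero, not_le]; linarith
  have hcne : c ≠ ∞ := by simp [hc, ENNReal.inv_ne_top, hofR]
  have hcne0 : c ≠ 0 := by simp [hc]
  have hle : r ≤ c • p := by
    rw [Measure.le_iff]
    intro A hA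
    calc r A ≤ p A / ENNReal.ofReal (1 - ε) := hdom A hA
      _ = c * p A := by rw [ENNReal.div_eq_inv_mul]
      _ = (c • p) A := by simp
  have hr2 : Integrable (fun x => ‖x‖ ^ 2) r :=
    (hp2.smul_measure hcne).mono_measure hle
  have hr1 : Integrable (fun x => x) r :=
    (hp1.smul_measure hcne).mono_measure hle
  refine ⟨hr2, hr1, ?_⟩
  -- absolute continuity and RN derivative
  have hac : r ≪ p := by
    refine Measure.AbsolutelyContinuous.mk fun A hA h0 => ?_
    have := hdom A hA
    rw [h0] at this
    simpa using this
  haveI := Measure.haveLebesgueDecomposition_of_sigmaFinite r p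
  set g : EuclideanSpace ℝ (Fin d) → ℝ≥0∞ := r.rnDeriv p with hg
  have hwd : p.withDensity g = r := Measure.withDensity_rnDeriv_eq r p hac
  have hglec : g ≤ᵐ[p] fun _ => c := by
    refine ae_le_of_forall_setLIntegral_le_of_sigmaFinite (Measure.measurable_rnDeriv r p)
      fun s hs _ => ?_
    rw [← withDensity_apply g hs, hwd, setLIntegral_const]
    calc r s ≤ p s / ENNReal.ofReal (1 - ε) := hdom s hs
      _ = c * p s := by rw [ENNReal.div_eq_inv_mul]
  have hglt : ∀ᵐ x ∂p, g x < ∞ := Measure.rnDeriv_lt_top r p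
  set G : EuclideanSpace ℝ (Fin d) → ℝ := fun x => (g x).toReal with hG
  have hGmeas : Measurable G := (Measure.measurable_rnDeriv r p).ennreal_toReal
  set C : ℝ := (1 - ε)⁻¹ with hC
  have hCc : c.toReal = C := by
    rw [hc, ENNReal.toReal_inv, ENNReal.toReal_ofReal h1ε.le]
  have hGle : ∀ᵐ x ∂p, G x ≤ C := by
    filter_upwards [hglec, hglt] with x hx hx2
    rw [← hCc]
    exact ENNReal.toReal_mono hcne hx
  have hG0 : ∀ x, 0 ≤ G x := fun x => ENNReal.toReal_nonneg
  -- integral identities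
  have hGsmul : ∀ (f : EuclideanSpace ℝ (Fin d) → ℝ), ∫ x, G x • f x ∂p = ∫ x, f x ∂r :=
    fun f => MeasureTheory.integral_rnDeriv_smul hac
  have hGint1 : ∫ x, G x ∂p = 1 := by
    have := hGsmul (fun _ => (1:ℝ))
    simpa using this
  have hGsm : AEStronglyMeasurable G p := hGmeas.aestronglyMeasurable
  have hGL2 : MemLp G 2 p := by
    refine MemLp.of_bound hGsm C ?_
    filter_upwards [hGle] with x hx
    rw [Real.norm_eq_abs, abs_of_nonneg (hG0 x)]
    exact hx
  have hHL2 : MemLp (fun x => G x - 1) 2 p := hGL2.sub (memLp_const 1)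
  have hGint : Integrable G p := hGL2.integrable (by norm_num)
  have hG2int : Integrable (fun x => G x ^ 2) p := hGL2.integrable_sq
  -- second moment of the density deviation
  have hHsq : ∫ x, (G x - 1) ^ 2 ∂p ≤ ε / (1 - ε) := by
    have hexp : ∫ x, (G x - 1) ^ 2 ∂p
        = ∫ x, G x ^ 2 ∂p - 2 * ∫ x, G x ∂p + 1 := by
      have h1 : Integrable (fun x => G x ^ 2 - 2 * G x) p := hG2int.sub (hGint.const_mul 2)
      calc ∫ x, (G x - 1) ^ 2 ∂p = ∫ x, (G x ^ 2 - 2 * G x) + 1 ∂p := by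
            refine integral_congr_ae (Filter.Eventually.of_forall fun x => ?_)
            ring
        _ = ∫ x, G x ^ 2 - 2 * G x ∂p + ∫ x, (1:ℝ) ∂p := integral_add h1 (integrable_const 1)
        _ = ∫ x, G x ^ 2 ∂p - 2 * ∫ x, G x ∂p + 1 := by
            rw [integral_sub hG2int (hGint.const_mul 2), integral_const_mul]
            simp
    have hG2le : ∫ x, G x ^ 2 ∂p ≤ C := by
      have hmono : ∫ x, G x ^ 2 ∂p ≤ ∫ x, C * G x ∂p := by
        refine integral_mono_ae hG2int (hGint.const_mul C) ?_
        filter_upwards [hGle] with x hx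
        calc G x ^ 2 = G x * G x := sq (G x) ▸ by ring
          _ ≤ C * G x := mul_le_mul_of_nonneg_right hx (hG0 x)
      rw [integral_const_mul, hGint1, mul_one] at hmono
      exact hmono
    rw [hexp, hGint1]
    have : C - 1 = ε / (1 - ε) := by
      rw [hC]; field_simp; ring
    linarith
  -- reduce to inner product with a unit vector
  set μp := ∫ y, y ∂p with hμp
  set μr := ∫ y, y ∂r with hμr
  by_cases hδ : μr - μp = 0
  · rw [hδ, norm_zero]
    positivity
  set δ := μr - μp with hδdef
  set v : EuclideanSpace ℝ (Fin d) := ‖δ‖⁻¹ • δ with hv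
  have hδn : (0:ℝ) < ‖δ‖ := norm_pos_iff.mpr hδ
  have hvnorm : ‖v‖ = 1 := by
    rw [hv, norm_smul, norm_inv, norm_norm, inv_mul_cancel₀ hδn.ne']
  set f : EuclideanSpace ℝ (Fin d) → ℝ := fun x => ⟪v, x - μp⟫ with hf
  -- integrability of f and x - μp
  have hxsubp : Integrable (fun x => x - μp) p := hp1.sub (integrable_const μp)
  have hxsubr : Integrable (fun x => x - μp) r := hr1.sub (integrable_const μp)
  have hfintp : Integrable f p := hxsubp.const_inner v
  have hfintr : Integrable f r := hxsubr.const_inner v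
  have hintp : ∫ x, x - μp ∂p = 0 := by
    rw [integral_sub hp1 (integrable_const μp), integral_const]
    simp [hμp]
  have hintr : ∫ x, x - μp ∂r = δ := by
    rw [integral_sub hr1 (integrable_const μp), integral_const]
    simp [hμr, hδdef]
  have hfp0 : ∫ x, f x ∂p = 0 := by
    rw [hf]
    rw [integral_inner hxsubp v, hintp, inner_zero_right]
  have hfr : ∫ x, f x ∂r = ‖δ‖ := by
    rw [hf, integral_inner hxsubr v, hintr, hv, real_inner_smul_left,
      real_inner_self_eq_norm_sq]
    field_simp
  -- MemLp of f
  have hidsm : AEStronglyMeasurable (fun x : EuclideanSpace ℝ (Fin d) => x) p :=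
    aestronglyMeasurable_id
  have hxL2 : MemLp (fun x : EuclideanSpace ℝ (Fin d) => x) 2 p :=
    (memLp_two_iff_integrable_sq_norm hidsm).mpr hp2
  have hxsubL2 : MemLp (fun x => x - μp) 2 p := hxL2.sub (memLp_const μp)
  have hfL2 : MemLp f 2 p := hxsubL2.const_inner v
  -- ∫ f dr = ∫ f (G - 1) dp
  have hGf : Integrable (fun x => G x • f x) p :=
    (MeasureTheory.integrable_rnDeriv_smul_iff hac).mpr hfintr
  have hGf' : Integrable (fun x => G x * f x) p := hGf
  have hsplit : ∫ x, f x * (G x - 1) ∂p = ∫ x, f x ∂r := by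
    have h1 : ∫ x, f x * (G x - 1) ∂p = ∫ x, G x * f x - f x ∂p := by
      refine integral_congr_ae (Filter.Eventually.of_forall fun x => ?_)
      ring
    rw [h1, integral_sub hGf' hfintp, hfp0, sub_zero]
    have := hGsmul f
    simpa [smul_eq_mul] using this
  -- Cauchy-Schwarz
  have hbound : ∫ x, f x * (G x - 1) ∂p ≤ σ * Real.sqrt (ε / (1 - ε)) := by
    refine cs_integral hfL2 hHL2 σ (Real.sqrt (ε / (1 - ε))) hσ (Real.sqrt_nonneg _) ?_ ?_
    · exact hcov v hvnorm.le
    · rw [Real.sq_sqrt (by positivity)]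
      exact hHsq
  calc ‖μr - μp‖ = ∫ x, f x ∂r := hfr.symm
    _ = ∫ x, f x * (G x - 1) ∂p := hsplit.symm
    _ ≤ σ * Real.sqrt (ε / (1 - ε)) := hbound
end

section
/- Let p and q be probability measures on ℝ^d with finite second moments such that TV(p, q) ≤ ε for some ε ∈ [0, 1), ‖Cov_p‖₂ ≤ σ_p², and ‖Cov_q‖₂ ≤ σ_q². Then ‖μ_p − μ_q‖₂ ≤ (σ_p + σ_q)·√(ε/(1 − ε)). -/
open MeasureTheory
open scoped RealInnerProductSpace ENNReal

/-- Cauchy–Schwarz: `(∫ f)² ≤ ν(univ) · ∫ f²` for a finite measure. -/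
lemma my_cs_sq {α : Type*} [MeasurableSpace α] (ν : Measure α) [IsFiniteMeasure ν]
    {f : α → ℝ} (hf : Integrable f ν) (hf2 : Integrable (fun x => f x ^ 2) ν) :
    (∫ x, f x ∂ν) ^ 2 ≤ (ν Set.univ).toReal * ∫ x, f x ^ 2 ∂ν := by
  set a : ℝ := (ν Set.univ).toReal with ha_def
  have ha : 0 ≤ a := ENNReal.toReal_nonneg
  rcases ha.eq_or_lt with ha0 | hapos
  · have hν : ν = 0 := by
      rw [← Measure.measure_univ_eq_zero]
      have h := (ENNReal.toReal_eq_zero_iff (ν Set.univ)).1 ha0.symm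
      exact h.resolve_right (measure_ne_top ν Set.univ)
    simp [hν]
  set b : ℝ := ∫ x, f x ∂ν with hb_def
  have key : (0:ℝ) ≤ ∫ x, (a * f x - b) ^ 2 ∂ν := integral_nonneg fun x => sq_nonneg _
  have e1 : Integrable (fun x => a ^ 2 * f x ^ 2 - 2 * a * b * f x) ν :=
    (hf2.const_mul _).sub (hf.const_mul _)
  have expand : ∫ x, (a * f x - b) ^ 2 ∂ν
      = a ^ 2 * ∫ x, f x ^ 2 ∂ν - 2 * a * b * b + a * b ^ 2 := by
    have h1 : ∀ x, (a * f x - b) ^ 2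
        = a ^ 2 * f x ^ 2 - 2 * a * b * f x + b ^ 2 := by intro x; ring
    simp_rw [h1]
    rw [integral_add e1 (integrable_const _),
      integral_sub (hf2.const_mul _) (hf.const_mul _), integral_const_mul,
      integral_const_mul, integral_const]
    simp [← hb_def, measureReal_def, ← ha_def, smul_eq_mul, mul_comm]
  rw [expand] at key
  nlinarith [sq_nonneg b]

/-- If `ν ≤ μ`, `μ` a probability measure, and `f` has mean zero under `μ`, then
`(∫ f dν)² ≤ a(1-a) ∫ f² dμ` where `a = ν(univ)`. -/
lemma my_sub_measure_bound {α : Type*} [MeasurableSpace α] (μ ν : Measure α)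
    [IsProbabilityMeasure μ] [IsFiniteMeasure ν] (hle : ν ≤ μ)
    {f : α → ℝ} (hf : Integrable f μ) (hf2 : Integrable (fun x => f x ^ 2) μ)
    (hmean : ∫ x, f x ∂μ = 0) :
    (∫ x, f x ∂ν) ^ 2
      ≤ (ν Set.univ).toReal * (1 - (ν Set.univ).toReal) * ∫ x, f x ^ 2 ∂μ := by
  set s : Measure α := μ - ν with hs_def
  have hadd : s + ν = μ := Measure.sub_add_cancel_of_le hle
  have hsle : s ≤ μ := Measure.sub_le
  haveI : IsFiniteMeasure s := isFiniteMeasure_of_le μ hsle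
  have hfν : Integrable f ν := hf.mono_measure hle
  have hfs : Integrable f s := hf.mono_measure hsle
  have hf2ν : Integrable (fun x => f x ^ 2) ν := hf2.mono_measure hle
  have hf2s : Integrable (fun x => f x ^ 2) s := hf2.mono_measure hsle
  set a : ℝ := (ν Set.univ).toReal with ha_def
  have ha0 : 0 ≤ a := ENNReal.toReal_nonneg
  have hmass : (s Set.univ).toReal = 1 - a := by
    have h : s Set.univ + ν Set.univ = 1 := by
      rw [← Measure.add_apply, hadd, measure_univ]
    have h1 : (s Set.univ).toReal + a = 1 := by
      rw [ha_def, ← ENNReal.toReal_add (measure_ne_top _ _) (measure_ne_top _ _), h]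
      simp
    linarith
  have ha1 : a ≤ 1 := by
    have := ENNReal.toReal_nonneg (a := s Set.univ); rw [hmass] at this; linarith
  have hsplit : ∫ x, f x ∂s + ∫ x, f x ∂ν = 0 := by
    rw [← integral_add_measure hfs hfν, hadd, hmean]
  have hsplit2 : ∫ x, f x ^ 2 ∂s + ∫ x, f x ^ 2 ∂ν = ∫ x, f x ^ 2 ∂μ := by
    rw [← integral_add_measure hf2s hf2ν, hadd]
  have cs1 : (∫ x, f x ∂ν) ^ 2 ≤ a * ∫ x, f x ^ 2 ∂ν := my_cs_sq ν hfν hf2ν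
  have cs2 : (∫ x, f x ∂ν) ^ 2 ≤ (1 - a) * ∫ x, f x ^ 2 ∂s := by
    have : (∫ x, f x ∂s) ^ 2 ≤ (s Set.univ).toReal * ∫ x, f x ^ 2 ∂s :=
      my_cs_sq s hfs hf2s
    rw [hmass] at this
    have hneg : ∫ x, f x ∂s = -∫ x, f x ∂ν := by linarith
    rw [hneg, neg_sq] at this
    exact this
  have h2ν : (1 - a) * (∫ x, f x ∂ν) ^ 2 ≤ (1 - a) * (a * ∫ x, f x ^ 2 ∂ν) :=
    mul_le_mul_of_nonneg_left cs1 (by linarith)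
  have h2s : a * (∫ x, f x ∂ν) ^ 2 ≤ a * ((1 - a) * ∫ x, f x ^ 2 ∂s) :=
    mul_le_mul_of_nonneg_left cs2 ha0
  rw [← hsplit2]
  nlinarith [h2ν, h2s]

/-- The total variation distance `TV(μ, ν) = sup_A |μ(A) − ν(A)|`, the supremum
running over measurable sets `A`. -/
noncomputable def tvDist {X : Type*} [MeasurableSpace X] (μ ν : Measure X) : ℝ :=
  ⨆ A : {A : Set X // MeasurableSet A}, |(μ A.1).toReal - (ν A.1).toReal|

set_option maxHeartbeats 1000000 in
/-- If `p` and `q` are probability measures with finite second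
moments, covariance spectral norms at most `σ_p²` and `σ_q²` respectively
(expressed through quadratic forms over unit directions), and `TV(p, q) ≤ ε`
with `ε ∈ [0, 1)`, then `‖μ_p − μ_q‖ ≤ (σ_p + σ_q)·√(ε/(1−ε))`. -/
theorem mean_shift_of_tv_close {d : ℕ}
    (p q : Measure (EuclideanSpace ℝ (Fin d)))
    (hp : IsProbabilityMeasure p) (hq : IsProbabilityMeasure q)
    (σp σq ε : ℝ) (hσp : 0 ≤ σp) (hσq : 0 ≤ σq) (hε0 : 0 ≤ ε) (hε1 : ε < 1)
    (hp2 : Integrable (fun x => ‖x‖ ^ 2) p) (hp1 : Integrable (fun x => x) p)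
    (hq2 : Integrable (fun x => ‖x‖ ^ 2) q) (hq1 : Integrable (fun x => x) q)
    (hTV : tvDist p q ≤ ε)
    (hcovp : ∀ v : EuclideanSpace ℝ (Fin d), ‖v‖ ≤ 1 →
      ∫ x, ⟪v, x - ∫ y, y ∂p⟫ ^ 2 ∂p ≤ σp ^ 2)
    (hcovq : ∀ v : EuclideanSpace ℝ (Fin d), ‖v‖ ≤ 1 →
      ∫ x, ⟪v, x - ∫ y, y ∂q⟫ ^ 2 ∂q ≤ σq ^ 2) :
    ‖(∫ y, y ∂p) - ∫ y, y ∂q‖ ≤ (σp + σq) * Real.sqrt (ε / (1 - ε)) := by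
  set μp := ∫ y, y ∂p with hμp_def
  set μq := ∫ y, y ∂q with hμq_def
  set w := μp - μq with hw_def
  by_cases hw : w = 0
  · rw [hw, norm_zero]
    positivity
  have hwnorm : 0 < ‖w‖ := norm_pos_iff.mpr hw
  set v : EuclideanSpace ℝ (Fin d) := ‖w‖⁻¹ • w with hv_def
  have hv1 : ‖v‖ = 1 := by
    rw [hv_def, norm_smul, norm_inv, norm_norm, inv_mul_cancel₀ hwnorm.ne']
  have hvw : ⟪v, w⟫ = ‖w‖ := by
    rw [hv_def, real_inner_smul_left, real_inner_self_eq_norm_sq]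
    rw [sq]
    field_simp
  -- Hahn decomposition
  obtain ⟨A, hA, hA1, hA2⟩ := hahn_decomposition (μ := p) (ν := q)
  set r : Measure (EuclideanSpace ℝ (Fin d)) := p.restrict Aᶜ + q.restrict A with hr_def
  have hrp : r ≤ p := by
    rw [Measure.le_iff]
    intro t ht
    rw [hr_def, Measure.add_apply, Measure.restrict_apply ht, Measure.restrict_apply ht]
    have h1 : q (t ∩ A) ≤ p (t ∩ A) :=
      hA1 _ (ht.inter hA) Set.inter_subset_right
    have h2 : p (t ∩ A) + p (t \ A) = p t := measure_inter_add_diff t hA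
    rw [← Set.diff_eq] at *
    calc p (t \ A) + q (t ∩ A) ≤ p (t \ A) + p (t ∩ A) := add_le_add_right h1 _
      _ = p t := by rw [add_comm]; exact h2
  have hrq : r ≤ q := by
    rw [Measure.le_iff]
    intro t ht
    rw [hr_def, Measure.add_apply, Measure.restrict_apply ht, Measure.restrict_apply ht]
    have h1 : p (t ∩ Aᶜ) ≤ q (t ∩ Aᶜ) :=
      hA2 _ (ht.inter hA.compl) Set.inter_subset_right
    have h2 : q (t ∩ A) + q (t \ A) = q t := measure_inter_add_diff t hA
    calc p (t ∩ Aᶜ) + q (t ∩ A) ≤ q (t ∩ Aᶜ) + q (t ∩ A) := add_le_add_left h1 _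
      _ = q t := by rw [← Set.diff_eq, add_comm]; exact h2
  set a : ℝ := (r Set.univ).toReal with ha_def
  have hmass : 1 - a = (p A).toReal - (q A).toReal := by
    have h1 : r Set.univ = p Aᶜ + q A := by
      rw [hr_def, Measure.add_apply, Measure.restrict_apply MeasurableSet.univ,
        Measure.restrict_apply MeasurableSet.univ, Set.univ_inter, Set.univ_inter]
    have h2 : p Aᶜ = 1 - p A := prob_compl_eq_one_sub hA
    have h3 : (p Aᶜ).toReal = 1 - (p A).toReal := by
      rw [h2, ENNReal.toReal_sub_of_le prob_le_one ENNReal.one_ne_top, ENNReal.toReal_one]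
    rw [ha_def, h1, ENNReal.toReal_add (measure_ne_top _ _) (measure_ne_top _ _), h3]
    ring
  have hqA_pA : (q A).toReal ≤ (p A).toReal :=
    ENNReal.toReal_mono (measure_ne_top _ _) (hA1 A hA subset_rfl)
  have h1a0 : 0 ≤ 1 - a := by rw [hmass]; linarith
  have h1aε : 1 - a ≤ ε := by
    have hbdd : BddAbove (Set.range fun B : {B : Set (EuclideanSpace ℝ (Fin d)) //
        MeasurableSet B} => |(p B.1).toReal - (q B.1).toReal|) := by
      refine ⟨1, ?_⟩
      rintro x ⟨B, rfl⟩
      have h1 : (p B.1).toReal ≤ 1 := by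
        have := prob_le_one (μ := p) (s := B.1)
        simpa using ENNReal.toReal_mono ENNReal.one_ne_top this
      have h2 : (q B.1).toReal ≤ 1 := by
        have := prob_le_one (μ := q) (s := B.1)
        simpa using ENNReal.toReal_mono ENNReal.one_ne_top this
      have h3 : (0:ℝ) ≤ (p B.1).toReal := ENNReal.toReal_nonneg
      have h4 : (0:ℝ) ≤ (q B.1).toReal := ENNReal.toReal_nonneg
      rw [abs_sub_le_iff]
      constructor <;> linarith
    have hle : |(p A).toReal - (q A).toReal| ≤ tvDist p q :=
      le_ciSup hbdd (⟨A, hA⟩ : {B : Set (EuclideanSpace ℝ (Fin d)) // MeasurableSet B})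
    rw [hmass]
    calc (p A).toReal - (q A).toReal ≤ |(p A).toReal - (q A).toReal| := le_abs_self _
      _ ≤ tvDist p q := hle
      _ ≤ ε := hTV
  have hapos : 0 < a := by linarith
  -- integrability facts
  have hint : ∀ (ρ : Measure (EuclideanSpace ℝ (Fin d))), IsProbabilityMeasure ρ →
      Integrable (fun x => ‖x‖ ^ 2) ρ → Integrable (fun x => x) ρ →
      ∀ m : EuclideanSpace ℝ (Fin d),
      Integrable (fun x => ⟪v, x - m⟫) ρ ∧ Integrable (fun x => ⟪v, x - m⟫ ^ 2) ρ := by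
    intro ρ hρ h2 h1 m
    have hsub : Integrable (fun x => x - m) ρ := h1.sub (integrable_const m)
    refine ⟨hsub.const_inner v, ?_⟩
    have hmeas : AEStronglyMeasurable (fun x => ⟪v, x - m⟫ ^ 2) ρ :=
      ((continuous_const.inner (continuous_id.sub continuous_const)).pow 2).aestronglyMeasurable
    have hg : Integrable (fun x => (‖x‖ + ‖m‖) ^ 2) ρ := by
      have heq : ∀ x : EuclideanSpace ℝ (Fin d),
          (‖x‖ + ‖m‖) ^ 2 = ‖x‖ ^ 2 + 2 * ‖m‖ * ‖x‖ + ‖m‖ ^ 2 := fun x => by ring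
      simp_rw [heq]
      exact (h2.add (h1.norm.const_mul _)).add (integrable_const _)
    refine hg.mono hmeas (Filter.Eventually.of_forall fun x => ?_)
    rw [Real.norm_eq_abs, Real.norm_eq_abs, abs_of_nonneg (sq_nonneg _),
      abs_of_nonneg (by positivity : (0:ℝ) ≤ (‖x‖ + ‖m‖) ^ 2)]
    have hb : |⟪v, x - m⟫| ≤ ‖x‖ + ‖m‖ := by
      calc |⟪v, x - m⟫| ≤ ‖v‖ * ‖x - m‖ := abs_real_inner_le_norm v (x - m)
        _ = ‖x - m‖ := by rw [hv1, one_mul]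
        _ ≤ ‖x‖ + ‖m‖ := norm_sub_le x m
    calc ⟪v, x - m⟫ ^ 2 = |⟪v, x - m⟫| ^ 2 := (sq_abs _).symm
      _ ≤ (‖x‖ + ‖m‖) ^ 2 := by
          exact pow_le_pow_left₀ (abs_nonneg _) hb 2
  obtain ⟨hip, hip2⟩ := hint p hp hp2 hp1 μp
  obtain ⟨hiq, hiq2⟩ := hint q hq hq2 hq1 μq
  -- mean zero
  have hmean : ∀ (ρ : Measure (EuclideanSpace ℝ (Fin d))), IsProbabilityMeasure ρ →
      Integrable (fun x => x) ρ → ∫ x, ⟪v, x - ∫ y, y ∂ρ⟫ ∂ρ = 0 := by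
    intro ρ hρ h1
    have hsub : Integrable (fun x => x - ∫ y, y ∂ρ) ρ := h1.sub (integrable_const _)
    rw [integral_inner hsub v, integral_sub h1 (integrable_const _), integral_const]
    simp [measure_univ]
  have hmeanp : ∫ x, ⟪v, x - μp⟫ ∂p = 0 := hmean p hp hp1
  have hmeanq : ∫ x, ⟪v, x - μq⟫ ∂q = 0 := hmean q hq hq1
  -- the two key bounds
  haveI : IsFiniteMeasure r := by
    constructor
    rw [hr_def, Measure.add_apply]
    exact ENNReal.add_lt_top.2 ⟨(measure_lt_top _ _), (measure_lt_top _ _)⟩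
  have haa : (0:ℝ) ≤ a * (1 - a) := mul_nonneg hapos.le h1a0
  have hbp : (∫ x, ⟪v, x - μp⟫ ∂r) ^ 2 ≤ a * (1 - a) * σp ^ 2 := by
    calc (∫ x, ⟪v, x - μp⟫ ∂r) ^ 2
        ≤ a * (1 - a) * ∫ x, ⟪v, x - μp⟫ ^ 2 ∂p :=
          my_sub_measure_bound p r hrp hip hip2 hmeanp
      _ ≤ a * (1 - a) * σp ^ 2 := mul_le_mul_of_nonneg_left (hcovp v hv1.le) haa
  have hbq : (∫ x, ⟪v, x - μq⟫ ∂r) ^ 2 ≤ a * (1 - a) * σq ^ 2 := by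
    calc (∫ x, ⟪v, x - μq⟫ ∂r) ^ 2
        ≤ a * (1 - a) * ∫ x, ⟪v, x - μq⟫ ^ 2 ∂q :=
          my_sub_measure_bound q r hrq hiq hiq2 hmeanq
      _ ≤ a * (1 - a) * σq ^ 2 := mul_le_mul_of_nonneg_left (hcovq v hv1.le) haa
  have habs : ∀ (b σ : ℝ), 0 ≤ σ → b ^ 2 ≤ a * (1 - a) * σ ^ 2 →
      |b| ≤ Real.sqrt (a * (1 - a)) * σ := by
    intro b σ hσ hb
    have h := Real.sqrt_le_sqrt hb
    rw [Real.sqrt_sq_eq_abs] at h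
    rwa [Real.sqrt_mul haa, Real.sqrt_sq hσ] at h
  have habsp := habs _ _ hσp hbp
  have habsq := habs _ _ hσq hbq
  -- difference of the two integrals
  have hdiff : ∫ x, ⟪v, x - μp⟫ ∂r - ∫ x, ⟪v, x - μq⟫ ∂r = -(a * ‖w‖) := by
    rw [← integral_sub (hip.mono_measure hrp) (hiq.mono_measure hrq)]
    have heq : ∀ x : EuclideanSpace ℝ (Fin d),
        ⟪v, x - μp⟫ - ⟪v, x - μq⟫ = -‖w‖ := by
      intro x
      rw [← inner_sub_right]
      have : (x - μp) - (x - μq) = -w := by rw [hw_def]; abel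
      rw [this, inner_neg_right, hvw]
    simp_rw [heq]
    rw [integral_const, smul_eq_mul, measureReal_def, ← ha_def]
    ring
  have key : a * ‖w‖ ≤ Real.sqrt (a * (1 - a)) * (σp + σq) := by
    have h1 := le_abs_self (∫ x, ⟪v, x - μq⟫ ∂r)
    have h2 := neg_abs_le (∫ x, ⟪v, x - μp⟫ ∂r)
    nlinarith [habsp, habsq]
  -- conclude
  have hsqrt : Real.sqrt (a * (1 - a)) ≤ a * Real.sqrt (ε / (1 - ε)) := by
    have hεpos : (0:ℝ) < 1 - ε := by linarith
    have h2 : a * (1 - a) ≤ a ^ 2 * (ε / (1 - ε)) := by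
      rw [mul_div_assoc' (a ^ 2) ε (1 - ε), le_div_iff₀ hεpos]
      nlinarith [h1aε, h1a0, hapos]
    calc Real.sqrt (a * (1 - a)) ≤ Real.sqrt (a ^ 2 * (ε / (1 - ε))) :=
          Real.sqrt_le_sqrt h2
      _ = a * Real.sqrt (ε / (1 - ε)) := by
          rw [Real.sqrt_mul (sq_nonneg a), Real.sqrt_sq hapos.le]
  have final : a * ‖w‖ ≤ a * ((σp + σq) * Real.sqrt (ε / (1 - ε))) := by
    calc a * ‖w‖ ≤ Real.sqrt (a * (1 - a)) * (σp + σq) := key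
      _ ≤ (a * Real.sqrt (ε / (1 - ε))) * (σp + σq) :=
          mul_le_mul_of_nonneg_right hsqrt (by linarith)
      _ = a * ((σp + σq) * Real.sqrt (ε / (1 - ε))) := by ring
  exact le_of_mul_le_mul_left final hapos
end

section
/- Let σ > 0, let n ≥ 1 be an integer, and let ε ∈ (0, 1/2]. Set ε′ = 1 − (1 − ε)^{1/n} and a = (σ/3)·√((1 − ε′)/ε′). Let p be the probability distribution on ℝ with p({a}) = ε′ and p({0}) = 1 − ε′, and let p′ be the Dirac measure at 0. Then: (i) the variance of p is at most σ² (indeed it equals σ²(1 − ε′)²/9) and the variance of p′ is 0; (ii) the total variation distance between the law of the average of n i.i.d. samples from p and the law of the average of n i.i.d. samples from p′ equals ε; and (iii) the means satisfy |E_p[x] − E_{p′}[x]| ≥ (σ/(3√2))·√(ε/n). -/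
set_option maxHeartbeats 1000000

open MeasureTheory

lemma my_integrable_dirac {f : ℝ → ℝ} (hf : Measurable f) (a : ℝ) :
    Integrable f (Measure.dirac a) := by
  refine ⟨hf.aestronglyMeasurable, ?_⟩
  simp [HasFiniteIntegral, lintegral_dirac]

lemma my_pi_dirac (n : ℕ) :
    (Measure.pi fun _ : Fin n => (Measure.dirac (0:ℝ))) = Measure.dirac (0 : Fin n → ℝ) := by
  refine Measure.pi_eq fun s hs => ?_
  rw [Measure.dirac_apply]
  by_cases h : ∀ i, (0:ℝ) ∈ s i
  · rw [Set.indicator_of_mem (show (0 : Fin n → ℝ) ∈ Set.univ.pi s from Set.mem_univ_pi.2 h)]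
    symm
    apply Finset.prod_eq_one
    intro i _
    rw [Measure.dirac_apply, Set.indicator_of_mem (h i)]; rfl
  · push_neg at h
    obtain ⟨i, hi⟩ := h
    rw [Set.indicator_of_notMem (show (0 : Fin n → ℝ) ∉ Set.univ.pi s by
      simp only [Set.mem_univ_pi]; push_neg; exact ⟨i, hi⟩)]
    symm
    apply Finset.prod_eq_zero (Finset.mem_univ i)
    rw [Measure.dirac_apply, Set.indicator_of_notMem hi]

/-- The one-dimensional lower-bound construction: with
`ε′ = 1 − (1−ε)^{1/n}`, `a = (σ/3)·√((1−ε′)/ε′)`, `p = ε′·δ_a + (1−ε′)·δ_0`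
and `p′ = δ_0`, we have (i) `Var(p) = σ²(1−ε′)²/9 ≤ σ²` and `Var(p′) = 0`;
(ii) the TV distance between the laws of the averages of `n` i.i.d. samples
from `p` and from `p′` equals `ε`; and (iii) the means of `p` and `p′` are at
least `(σ/(3√2))·√(ε/n)` apart. -/
theorem one_dimensional_lower_bound_construction
    (σ : ℝ) (hσ : 0 < σ) (n : ℕ) (hn : 1 ≤ n)
    (ε : ℝ) (hε0 : 0 < ε) (hε : ε ≤ 1 / 2)
    (ε' a : ℝ)
    (hε' : ε' = 1 - (1 - ε) ^ ((n : ℝ)⁻¹))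
    (ha : a = σ / 3 * Real.sqrt ((1 - ε') / ε'))
    (p p' : Measure ℝ)
    (hpdef : p = ENNReal.ofReal ε' • Measure.dirac a +
      ENNReal.ofReal (1 - ε') • Measure.dirac 0)
    (hp'def : p' = Measure.dirac 0)
    (avg : (Fin n → ℝ) → ℝ) (havg : avg = fun x : Fin n → ℝ => (∑ i, x i) / n) :
    (ProbabilityTheory.variance id p = σ ^ 2 * (1 - ε') ^ 2 / 9 ∧
        ProbabilityTheory.variance id p ≤ σ ^ 2) ∧
      ProbabilityTheory.variance id p' = 0 ∧
      tvDist (Measure.map avg (Measure.pi fun _ : Fin n => p))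
          (Measure.map avg (Measure.pi fun _ : Fin n => p')) = ε ∧
      σ / (3 * Real.sqrt 2) * Real.sqrt (ε / n) ≤ |(∫ x, x ∂p) - ∫ x, x ∂p'| := by
  -- basic numeric facts
  have hnR : (1:ℝ) ≤ (n:ℝ) := by exact_mod_cast hn
  have hnpos : (0:ℝ) < n := by linarith
  have hnne : (n:ℝ) ≠ 0 := ne_of_gt hnpos
  have hε1 : ε < 1 := lt_of_le_of_lt hε (by norm_num)
  have h1ε : (0:ℝ) < 1 - ε := by linarith
  have hε'pos : 0 < ε' := by
    rw [hε']
    have : (1 - ε) ^ ((n:ℝ)⁻¹) < 1 :=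
      Real.rpow_lt_one h1ε.le (by linarith) (by positivity)
    linarith
  have h1ε'half : (1:ℝ)/2 ≤ 1 - ε' := by
    have h1 : (1 - ε) ^ (1:ℝ) ≤ (1 - ε) ^ ((n:ℝ)⁻¹) :=
      Real.rpow_le_rpow_of_exponent_ge h1ε (by linarith)
        (by rw [inv_le_one_iff₀]; right; exact hnR)
    rw [Real.rpow_one] at h1
    rw [hε']
    linarith
  have hε'lt1 : ε' < 1 := by linarith
  have h1ε'pos : (0:ℝ) < 1 - ε' := by linarith
  have hε'ne : ε' ≠ 0 := ne_of_gt hε'pos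
  -- Bernoulli: ε / n ≤ ε'
  have hεdivn : ε / n ≤ ε := by
    apply div_le_self hε0.le hnR
  have h1εdivn : (0:ℝ) ≤ 1 - ε / n := by linarith
  have hεn : ε / n ≤ ε' := by
    have hbern : 1 - ε ≤ (1 - ε / n) ^ n := by
      have h0 := one_add_mul_le_pow (a := -(ε / n)) (by nlinarith) n
      have he : (1:ℝ) + -(ε / n) = 1 - ε / n := by ring
      rw [he] at h0
      have hc : (n:ℝ) * (ε / n) = ε := by field_simp
      calc (1:ℝ) - ε = 1 + (n:ℝ) * -(ε / n) := by rw [mul_neg, hc]; ring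
        _ ≤ (1 - ε / n) ^ n := h0
    have h2 : (1 - ε) ^ ((n:ℝ)⁻¹) ≤ ((1 - ε / n) ^ n) ^ ((n:ℝ)⁻¹) :=
      Real.rpow_le_rpow h1ε.le hbern (by positivity)
    rw [← Real.rpow_natCast (1 - ε / n) n, ← Real.rpow_mul h1εdivn,
      mul_inv_cancel₀ hnne, Real.rpow_one] at h2
    rw [hε']
    linarith
  have ha_pos : 0 < a := by
    rw [ha]
    have : 0 < (1 - ε') / ε' := by positivity
    positivity
  have hane : a ≠ 0 := ne_of_gt ha_pos
  -- probability measures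
  have hpuniv : p Set.univ = 1 := by
    rw [hpdef]
    simp only [Measure.coe_add, Pi.add_apply, Measure.smul_apply, measure_univ,
      smul_eq_mul, mul_one]
    rw [← ENNReal.ofReal_add hε'pos.le (by linarith)]
    norm_num
  haveI hprob : IsProbabilityMeasure p := ⟨hpuniv⟩
  haveI hprob' : IsProbabilityMeasure p' := by rw [hp'def]; infer_instance
  -- single-point measures of p
  have hp_single : ∀ s : Set ℝ, a ∉ s → 0 ∈ s → p s = ENNReal.ofReal (1 - ε') := by
    intro s has h0s
    rw [hpdef]
    simp only [Measure.coe_add, Pi.add_apply, Measure.smul_apply, smul_eq_mul]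
    rw [Measure.dirac_apply, Measure.dirac_apply, Set.indicator_of_notMem has,
      Set.indicator_of_mem h0s]
    simp
  have hp0 : p {0} = ENNReal.ofReal (1 - ε') :=
    hp_single {0} (by simp [hane]) rfl
  have hp0a : p {0, a} = 1 := by
    rw [hpdef]
    simp only [Measure.coe_add, Pi.add_apply, Measure.smul_apply, smul_eq_mul]
    rw [Measure.dirac_apply, Measure.dirac_apply,
      Set.indicator_of_mem (by simp : a ∈ ({0, a} : Set ℝ)),
      Set.indicator_of_mem (by simp : (0:ℝ) ∈ ({0, a} : Set ℝ))]
    simp only [Pi.one_apply, mul_one]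
    rw [← ENNReal.ofReal_add hε'pos.le (by linarith)]
    norm_num
  -- integrals against p
  have hInt : ∀ f : ℝ → ℝ, Measurable f → Integrable f p := by
    intro f hf
    rw [hpdef]
    exact Integrable.add_measure
      ((my_integrable_dirac hf a).smul_measure ENNReal.ofReal_ne_top)
      ((my_integrable_dirac hf 0).smul_measure ENNReal.ofReal_ne_top)
  have hMeanf : ∀ f : ℝ → ℝ, Measurable f →
      ∫ x, f x ∂p = ε' * f a + (1 - ε') * f 0 := by
    intro f hf
    rw [hpdef, integral_add_measure
        ((my_integrable_dirac hf a).smul_measure ENNReal.ofReal_ne_top)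
        ((my_integrable_dirac hf 0).smul_measure ENNReal.ofReal_ne_top),
      integral_smul_measure, integral_smul_measure, integral_dirac, integral_dirac,
      ENNReal.toReal_ofReal hε'pos.le, ENNReal.toReal_ofReal (by linarith : (0:ℝ) ≤ 1 - ε')]
    simp [smul_eq_mul]
  have hMean : ∫ x, x ∂p = ε' * a := by
    have := hMeanf (fun x => x) measurable_id
    simpa using this
  have hSq : ∫ x, x ^ 2 ∂p = ε' * a ^ 2 := by
    have := hMeanf (fun x => x ^ 2) (measurable_id.pow_const 2)
    simpa using this
  -- (i) variance of p
  have hae : ∀ᵐ x ∂p, x ∈ Set.Icc 0 a := by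
    have hc : p (Set.Icc 0 a)ᶜ = 0 := by
      have hsub : (Set.Icc 0 a)ᶜ ⊆ ({0, a} : Set ℝ)ᶜ := by
        apply Set.compl_subset_compl.2
        intro x hx
        simp only [Set.mem_insert_iff, Set.mem_singleton_iff] at hx
        rcases hx with rfl | rfl
        · exact ⟨le_rfl, ha_pos.le⟩
        · exact ⟨ha_pos.le, le_rfl⟩
      have h1 : p ({0, a} : Set ℝ)ᶜ = 0 := by
        have := measure_compl (show MeasurableSet ({0, a} : Set ℝ) by measurability)
          (measure_ne_top p _)
        rw [this, hp0a, measure_univ, tsub_self]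
      exact measure_mono_null hsub h1
    rw [ae_iff]
    exact hc
  have hmem2 : MemLp id 2 p :=
    memLp_of_bounded hae measurable_id.aestronglyMeasurable 2
  have ha2 : a ^ 2 = σ ^ 2 / 9 * ((1 - ε') / ε') := by
    rw [ha, mul_pow, Real.sq_sqrt (by positivity)]
    ring
  have hvar : ProbabilityTheory.variance id p = σ ^ 2 * (1 - ε') ^ 2 / 9 := by
    rw [ProbabilityTheory.variance_eq_sub hmem2]
    simp only [Pi.pow_apply, id_eq]
    rw [hSq, hMean, mul_pow, ha2]
    field_simp
  have hvarle : ProbabilityTheory.variance id p ≤ σ ^ 2 := by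
    rw [hvar]
    have h1 : (1 - ε') ^ 2 ≤ 1 := by nlinarith
    nlinarith [sq_nonneg σ, mul_le_mul_of_nonneg_left h1 (sq_nonneg σ)]
  -- variance of p'
  have hvar' : ProbabilityTheory.variance id p' = 0 := by
    rw [hp'def]
    haveI : IsProbabilityMeasure (Measure.dirac (0:ℝ)) := by infer_instance
    have hmem : MemLp (id : ℝ → ℝ) 2 (Measure.dirac 0) := by
      apply memLp_of_bounded (a := 0) (b := 0) _ measurable_id.aestronglyMeasurable
      rw [MeasureTheory.ae_dirac_eq]
      simp
    rw [ProbabilityTheory.variance_eq_sub hmem]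
    simp only [Pi.pow_apply, id_eq]
    rw [integral_dirac, integral_dirac]
    norm_num
  -- power identity
  have hpow : (1 - ε') ^ n = 1 - ε := by
    rw [hε']
    have : (1:ℝ) - (1 - (1 - ε) ^ ((n:ℝ)⁻¹)) = (1 - ε) ^ ((n:ℝ)⁻¹) := by ring
    rw [this, ← Real.rpow_natCast ((1 - ε) ^ ((n:ℝ)⁻¹)) n, ← Real.rpow_mul h1ε.le,
      inv_mul_cancel₀ hnne, Real.rpow_one]
  -- (ii) TV distance
  have havgm : Measurable avg := by
    rw [havg]
    exact (Finset.measurable_sum _ fun i _ => measurable_pi_apply i).div_const _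
  set P := Measure.pi fun _ : Fin n => p with hP
  set μ := Measure.map avg P with hμ
  haveI hPprob : IsProbabilityMeasure P := by rw [hP]; infer_instance
  haveI hμprob : IsProbabilityMeasure μ := Measure.isProbabilityMeasure_map havgm.aemeasurable
  have hδ0 : Measure.map avg (Measure.pi fun _ : Fin n => p') = Measure.dirac 0 := by
    rw [hp'def, my_pi_dirac n, Measure.map_dirac' havgm]
    congr 1
    rw [havg]
    simp
  have hμ0 : μ {0} = ENNReal.ofReal (1 - ε) := by
    rw [hμ, Measure.map_apply havgm (measurableSet_singleton 0)]
    set T : Set (Fin n → ℝ) := Set.pi Set.univ fun _ => ({0} : Set ℝ) with hTdef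
    set S : Set (Fin n → ℝ) := Set.pi Set.univ fun _ => ({0, a} : Set ℝ) with hSdef
    have hPT : P T = ENNReal.ofReal (1 - ε) := by
      rw [hTdef, hP, Measure.pi_pi]
      simp only [hp0]
      rw [Finset.prod_const, Finset.card_univ, Fintype.card_fin,
        ← ENNReal.ofReal_pow (by linarith), hpow]
    have hPSc : P Sᶜ = 0 := by
      have hSm : MeasurableSet S := MeasurableSet.univ_pi fun _ => by measurability
      have hPS : P S = 1 := by
        rw [hSdef, hP, Measure.pi_pi]
        simp [hp0a]
      rw [measure_compl hSm (measure_ne_top P _), hPS, measure_univ, tsub_self]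
    have hTsub : T ⊆ avg ⁻¹' {0} := by
      intro x hx
      have : ∀ i, x i = 0 := by
        intro i
        have := hx i (Set.mem_univ i)
        simpa using this
      simp only [Set.mem_preimage, Set.mem_singleton_iff, havg]
      simp [this]
    have hdiff : avg ⁻¹' {0} \ T ⊆ Sᶜ := by
      intro x hx
      rcases hx with ⟨hx0, hxT⟩
      intro hxS
      apply hxT
      have hmem : ∀ i, x i = 0 ∨ x i = a := by
        intro i
        have := hxS i (Set.mem_univ i)
        simpa using this
      have hnonneg : ∀ i ∈ Finset.univ, (0:ℝ) ≤ x i := by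
        intro i _
        rcases hmem i with h | h <;> simp [h, ha_pos.le]
      have hsum0 : ∑ i, x i = 0 := by
        have : avg x = 0 := hx0
        rw [havg] at this
        simp only at this
        field_simp at this
        simpa using this
      have hall : ∀ i ∈ Finset.univ, x i = 0 :=
        (Finset.sum_eq_zero_iff_of_nonneg hnonneg).1 hsum0
      intro i _
      simpa using hall i (Finset.mem_univ i)
    have hle : P (avg ⁻¹' {0}) ≤ P T := by
      have hu : avg ⁻¹' {0} ⊆ T ∪ Sᶜ := by
        intro x hx
        by_cases hxT : x ∈ T
        · exact Or.inl hxT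
        · exact Or.inr (hdiff ⟨hx, hxT⟩)
      calc P (avg ⁻¹' {0}) ≤ P (T ∪ Sᶜ) := measure_mono hu
        _ ≤ P T + P Sᶜ := measure_union_le _ _
        _ = P T := by rw [hPSc, add_zero]
    exact le_antisymm (hPT ▸ hle) (hPT ▸ measure_mono hTsub)
  have hμ0c : μ {0}ᶜ = ENNReal.ofReal ε := by
    rw [measure_compl (measurableSet_singleton 0) (measure_ne_top μ _), measure_univ, hμ0]
    rw [← ENNReal.ofReal_one, ← ENNReal.ofReal_sub _ (by linarith : (0:ℝ) ≤ 1 - ε)]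
    norm_num
  have htv : tvDist μ (Measure.dirac 0) = ε := by
    have hbound : ∀ A : {A : Set ℝ // MeasurableSet A},
        |(μ A.1).toReal - ((Measure.dirac (0:ℝ)) A.1).toReal| ≤ ε := by
      rintro ⟨A, hA⟩
      have hμA1 : (μ A).toReal ≤ 1 := by
        have := prob_le_one (μ := μ) (s := A)
        exact ENNReal.toReal_le_of_le_ofReal (by norm_num) (by rw [ENNReal.ofReal_one]; exact this)
      have hμA0 : 0 ≤ (μ A).toReal := ENNReal.toReal_nonneg
      by_cases h0A : (0:ℝ) ∈ A
      · have hd : (Measure.dirac (0:ℝ)) A = 1 := Measure.dirac_apply_of_mem h0A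
        have hge : 1 - ε ≤ (μ A).toReal := by
          have hm : μ {0} ≤ μ A := measure_mono (Set.singleton_subset_iff.2 h0A)
          rw [hμ0] at hm
          have := ENNReal.toReal_mono (measure_ne_top μ A) hm
          rwa [ENNReal.toReal_ofReal (by linarith : (0:ℝ) ≤ 1 - ε)] at this
        rw [hd, ENNReal.toReal_one, abs_le]
        constructor <;> linarith
      · have hd : (Measure.dirac (0:ℝ)) A = 0 := by
          rw [Measure.dirac_apply, Set.indicator_of_notMem h0A]
        have hle : (μ A).toReal ≤ ε := by
          have hm : μ A ≤ μ {0}ᶜ := measure_mono fun x hx => by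
            simp only [Set.mem_compl_iff, Set.mem_singleton_iff]
            rintro rfl; exact h0A hx
          rw [hμ0c] at hm
          have := ENNReal.toReal_mono ENNReal.ofReal_ne_top hm
          rwa [ENNReal.toReal_ofReal hε0.le] at this
        rw [hd]
        simp only [ENNReal.toReal_zero, sub_zero]
        rw [abs_of_nonneg hμA0]
        exact hle
    have hwit : |(μ ({0}ᶜ : Set ℝ)).toReal - ((Measure.dirac (0:ℝ)) ({0}ᶜ : Set ℝ)).toReal|
        = ε := by
      rw [hμ0c, Measure.dirac_apply, Set.indicator_of_notMem (by simp)]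
      simp [ENNReal.toReal_ofReal hε0.le, abs_of_nonneg hε0.le]
    have hbdd : BddAbove (Set.range fun A : {A : Set ℝ // MeasurableSet A} =>
        |(μ A.1).toReal - ((Measure.dirac (0:ℝ)) A.1).toReal|) :=
      ⟨ε, by rintro x ⟨A, rfl⟩; exact hbound A⟩
    unfold tvDist
    apply le_antisymm
    · exact ciSup_le hbound
    · calc ε = |(μ ({0}ᶜ : Set ℝ)).toReal -
          ((Measure.dirac (0:ℝ)) ({0}ᶜ : Set ℝ)).toReal| := hwit.symm
        _ ≤ _ := le_ciSup hbdd ⟨({0}ᶜ : Set ℝ), (measurableSet_singleton 0).compl⟩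
  -- (iii) means
  have hMean' : ∫ x, x ∂p' = 0 := by
    rw [hp'def, integral_dirac]
  have hmeans : σ / (3 * Real.sqrt 2) * Real.sqrt (ε / n) ≤ |(∫ x, x ∂p) - ∫ x, x ∂p'| := by
    rw [hMean, hMean', sub_zero, abs_of_nonneg (by positivity : (0:ℝ) ≤ ε' * a)]
    have key : ε' * a = σ / 3 * Real.sqrt (ε' * (1 - ε')) := by
      rw [ha]
      have : ε' * Real.sqrt ((1 - ε') / ε') = Real.sqrt (ε' * (1 - ε')) := by
        rw [← Real.sqrt_sq hε'pos.le, ← Real.sqrt_mul (sq_nonneg ε')]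
        congr 1
        field_simp
        rw [Real.sqrt_sq hε'pos.le]
      rw [← this]
      ring
    rw [key]
    have hs2 : (0:ℝ) < Real.sqrt 2 := by positivity
    have hs2' : Real.sqrt 2 ≠ 0 := ne_of_gt hs2
    have hlhs : σ / (3 * Real.sqrt 2) * Real.sqrt (ε / n)
        = σ / 3 * Real.sqrt (ε / n / 2) := by
      rw [Real.sqrt_div (by positivity : (0:ℝ) ≤ ε / n) 2]
      have h2 : Real.sqrt 2 * Real.sqrt 2 = 2 := Real.mul_self_sqrt (by norm_num)
      field_simp
    rw [hlhs]
    apply mul_le_mul_of_nonneg_left _ (by positivity : (0:ℝ) ≤ σ / 3)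
    apply Real.sqrt_le_sqrt
    nlinarith [mul_le_mul hεn h1ε'half (by norm_num : (0:ℝ) ≤ 1/2) hε'pos.le]
  exact ⟨⟨hvar, hvarle⟩, hvar', by rw [hδ0]; exact htv, hmeans⟩
end
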